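/- arXiv:1412.4438 — 2 statements merged into one kernel-verified Lean document; each statement's English description precedes it below -/
import Mathlib

section
/- (Theorem 1) A point u* ∈ ℝ^N is a solution of the minimization problem min_{u ∈ ℝ^N} f₁(Bu) + f₂(u) if and only if there exists v* ∈ ℝ^M such that v* = T₁(v*, u*) and u* = T₂(v*, u*), i.e. (v*, u*) is a fixed point of T. -/
/-!
At a minimizer `u*`, the subdifferential calculus for the convex function `f₁ ∘ B + f₂` (with
`f₁` finite everywhere, so no qualification condition is needed) gives a subgradient `y` of `f₁`
at `B u*` with `∇f₂(u*) = -Bᵀ y`; conversely such a `y` certifies optimality. The proximity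
operator is characterized in the same way: `prox_{f₁/λ}(w) = p` iff `λ (w - p) ∈ ∂f₁(p)`. With
`v = y / λ` the two fixed-point equations of `T` unwind to exactly these two conditions: the
second says `Q⁻¹ (∇f₂(u) + λ Bᵀ v) = 0`, and then the argument of the proximity operator in `T₁`
collapses to `B u + v`.
-/

open scoped RealInnerProductSpace InnerProduct

open Set

section Marginal

variable {E F : Type*} [AddCommGroup E] [Module ℝ E] [AddCommGroup F] [Module ℝ F]
  {G : E × F → ℝ}

lemma ConvexOn.bddBelow_range_snd (hG : ConvexOn ℝ univ G)
    (h₀ : BddBelow (range fun y => G (0, y))) (x : E) : BddBelow (range fun y => G (x, y)) := by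
  obtain ⟨m, hm⟩ := h₀
  -- `(0, y / 2)` is the midpoint of `(x, y)` and `(-x, 0)`
  refine ⟨2 * m - G (-x, 0), ?_⟩
  rintro _ ⟨y, rfl⟩
  have hmid : G (0, (1 / 2 : ℝ) • y) ≤ (1 / 2 : ℝ) * G (x, y) + (1 / 2 : ℝ) * G (-x, 0) := by
    simpa using hG.2 (mem_univ (x, y)) (mem_univ (-x, (0 : F))) (by norm_num) (by norm_num)
      (by norm_num : (1 / 2 : ℝ) + 1 / 2 = 1)
  have := hm ⟨(1 / 2 : ℝ) • y, rfl⟩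
  dsimp only at this ⊢
  linarith

lemma ConvexOn.ciInf_snd (hG : ConvexOn ℝ univ G)
    (hbdd : ∀ x, BddBelow (range fun y => G (x, y))) :
    ConvexOn ℝ univ fun x => ⨅ y, G (x, y) := by
  refine ⟨convex_univ, fun x₁ _ x₂ _ a b ha hb hab => le_of_forall_pos_le_add fun ε hε => ?_⟩
  obtain ⟨y₁, hy₁⟩ := exists_lt_of_ciInf_lt (lt_add_of_pos_right (⨅ y, G (x₁, y)) hε)
  obtain ⟨y₂, hy₂⟩ := exists_lt_of_ciInf_lt (lt_add_of_pos_right (⨅ y, G (x₂, y)) hε)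
  calc ⨅ y, G (a • x₁ + b • x₂, y) ≤ G (a • (x₁, y₁) + b • (x₂, y₂)) :=
        ciInf_le (hbdd _) (a • y₁ + b • y₂)
    _ ≤ a • G (x₁, y₁) + b • G (x₂, y₂) := hG.2 (mem_univ _) (mem_univ _) ha hb hab
    _ ≤ a • ((⨅ y, G (x₁, y)) + ε) + b • ((⨅ y, G (x₂, y)) + ε) := by gcongr
    _ = a • (⨅ y, G (x₁, y)) + b • (⨅ y, G (x₂, y)) + ε := by
        simp only [smul_eq_mul]
        linear_combination ε * hab

end Marginal

section Subgradient

variable {E F : Type*} [NormedAddCommGroup E] [InnerProductSpace ℝ E]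
  [NormedAddCommGroup F] [InnerProductSpace ℝ F]

def HasSubgradientAt (f : E → ℝ) (g x : E) : Prop :=
  ∀ y, f x + ⟪g, y - x⟫ ≤ f y

lemma hasSubgradientAt_const_mul_iff {f : E → ℝ} {c : ℝ} (hc : 0 < c) {g x : E} :
    HasSubgradientAt (fun z => c * f z) (c • g) x ↔ HasSubgradientAt f g x := by
  refine forall_congr' fun y => ?_
  rw [real_inner_smul_left, ← mul_add, mul_le_mul_iff_right₀ hc]

lemma ConvexOn.hasSubgradientAt_of_hasGradientAt [CompleteSpace E] {f : E → ℝ}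
    (hf : ConvexOn ℝ univ f) {g x : E} (h : HasGradientAt f g x) : HasSubgradientAt f g x := by
  intro y
  have hline : HasDerivAt (f ∘ AffineMap.lineMap (k := ℝ) x y) ⟪g, y - x⟫ 0 := by
    simpa using h.hasFDerivAt.comp_hasDerivAt_of_eq (0 : ℝ) AffineMap.hasDerivAt_lineMap (by simp)
  have := (hf.comp_affineMap (AffineMap.lineMap x y)).le_slope_of_hasDerivAt (mem_univ 0)
    (mem_univ 1) zero_lt_one hline
  simp only [slope_def_field, Function.comp_apply, AffineMap.lineMap_apply_zero,
    AffineMap.lineMap_apply_one, sub_zero, div_one] at this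
  linarith

lemma HasGradientAt.eq_of_hasSubgradientAt [CompleteSpace E] {f : E → ℝ} {g s x : E}
    (h : HasGradientAt f g x) (hs : HasSubgradientAt f s x) : g = s := by
  have hmin : IsLocalMin (fun y => f y - ⟪s, y⟫) x := Filter.Eventually.of_forall fun y => by
    have := hs y
    rw [inner_sub_right] at this
    dsimp only
    linarith
  have hzero := hmin.hasFDerivAt_eq_zero (h.hasFDerivAt.sub (innerSL ℝ s).hasFDerivAt)
  refine ext_inner_right ℝ fun v => ?_
  simpa [sub_eq_zero] using congr($hzero v)

lemma ConvexOn.exists_hasSubgradientAt [FiniteDimensional ℝ E] {f : E → ℝ}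
    (hf : ConvexOn ℝ univ f) (x : E) : ∃ g, HasSubgradientAt f g x := by
  have hcont : Continuous f := continuousOn_univ.mp (hf.continuousOn isOpen_univ)
  obtain ⟨φ, hφ⟩ := geometric_hahn_banach_open_point (s := {p : E × ℝ | f p.1 < p.2})
    (x := (x, f x))
    (by simpa using hf.convex_strict_epigraph)
    (isOpen_lt (hcont.comp continuous_fst) continuous_snd) (lt_irrefl (f x))
  set ℓ : StrongDual ℝ E := φ.comp (.inl ℝ E ℝ)
  set β := φ (0, 1)
  have hφ_apply (w : E) (r : ℝ) : φ (w, r) = ℓ w + r * β := by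
    have hwr : (w, r) = (w, (0 : ℝ)) + r • ((0 : E), (1 : ℝ)) := by simp
    rw [hwr, map_add, map_smul, smul_eq_mul, mul_comm]
    rfl
  have hsep (w : E) (r : ℝ) (hr : f w < r) : ℓ w + r * β < ℓ x + f x * β := by
    simpa only [hφ_apply] using hφ (w, r) hr
  -- the separating hyperplane is not vertical, so it is the graph of an affine minorant of `f`
  have hβ : β < 0 := by linarith [hsep x (f x + 1) (lt_add_one _)]
  have hsupport (w : E) : ℓ w + f w * β ≤ ℓ x + f x * β := by
    refine le_of_forall_pos_lt_add fun ε hε => ?_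
    have := hsep w (f w + ε / -β) (by simpa using div_pos hε (neg_pos.2 hβ))
    rw [add_mul, div_mul_eq_mul_div, div_neg, mul_div_assoc, div_self hβ.ne] at this
    linarith
  refine ⟨(-β)⁻¹ • (InnerProductSpace.toDual ℝ E).symm ℓ, fun y => ?_⟩
  rw [real_inner_smul_left, InnerProductSpace.toDual_symm_apply, map_sub,
    inv_mul_eq_div, ← le_sub_iff_add_le', div_le_iff₀ (neg_pos.2 hβ)]
  linarith [hsupport y]

lemma IsMinOn.exists_hasSubgradientAt_comp_add [FiniteDimensional ℝ E] [FiniteDimensional ℝ F]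
    {f₁ : F → ℝ} {f₂ : E → ℝ} (hf₁ : ConvexOn ℝ univ f₁) (hf₂ : ConvexOn ℝ univ f₂)
    {B : E →L[ℝ] F} {x : E} (hmin : IsMinOn (fun u => f₁ (B u) + f₂ u) univ x) :
    ∃ y, HasSubgradientAt f₁ y (B x) ∧ HasSubgradientAt f₂ (-((B†) y)) x := by
  -- perturb the problem by a shift `w` inside `f₁` and take a subgradient of its value at `w = 0`
  set G : F × E → ℝ := fun p => f₁ (B p.2 + p.1) + f₂ p.2
  have hG : ConvexOn ℝ univ G := by
    have := (hf₁.comp_linearMap (B.toLinearMap ∘ₗ .snd ℝ F E + .fst ℝ F E)).add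
      (hf₂.comp_linearMap (.snd ℝ F E))
    rw [preimage_univ] at this
    exact this
  have hbdd := hG.bddBelow_range_snd
    ⟨_, by rintro _ ⟨u, rfl⟩; simpa [G] using hmin (mem_univ u)⟩
  have hvalue : ⨅ u, G (0, u) = f₁ (B x) + f₂ x :=
    le_antisymm ((ciInf_le (hbdd 0) x).trans_eq (by simp [G]))
      (le_ciInf fun u => by simpa [G] using hmin (mem_univ u))
  obtain ⟨y, hy⟩ := (hG.ciInf_snd hbdd).exists_hasSubgradientAt 0
  have hperturb (z : F) (u : E) : f₁ (B x) + f₂ x + ⟪y, z - B u⟫ ≤ f₁ z + f₂ u := by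
    have := (hy (z - B u)).trans (ciInf_le (hbdd _) u)
    dsimp only at this
    rw [hvalue] at this
    simpa [G] using this
  refine ⟨y, fun z => by linarith [hperturb z x], fun u => ?_⟩
  have := hperturb (B x) u
  rw [inner_neg_left, ContinuousLinearMap.adjoint_inner_left, map_sub, ← neg_sub,
    inner_neg_right]
  linarith

lemma isMinOn_comp_add_iff [FiniteDimensional ℝ E] [FiniteDimensional ℝ F]
    {f₁ : F → ℝ} {f₂ : E → ℝ} (hf₁ : ConvexOn ℝ univ f₁) (hf₂ : ConvexOn ℝ univ f₂)
    {B : E →L[ℝ] F} {x g : E} (hg : HasGradientAt f₂ g x) :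
    IsMinOn (fun u => f₁ (B u) + f₂ u) univ x ↔
      ∃ y, HasSubgradientAt f₁ y (B x) ∧ g = -((B†) y) := by
  refine ⟨fun hmin => ?_, ?_⟩
  · obtain ⟨y, hy₁, hy₂⟩ := hmin.exists_hasSubgradientAt_comp_add hf₁ hf₂
    exact ⟨y, hy₁, hg.eq_of_hasSubgradientAt hy₂⟩
  · rintro ⟨y, hy, rfl⟩
    refine isMinOn_univ_iff.2 fun u => ?_
    have h₁ := hy (B u)
    have h₂ := hf₂.hasSubgradientAt_of_hasGradientAt hg u
    rw [inner_neg_left, ContinuousLinearMap.adjoint_inner_left, map_sub] at h₂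
    linarith

lemma isMinOn_prox_iff [FiniteDimensional ℝ F] {f : F → ℝ} (hf : ConvexOn ℝ univ f) {lam : ℝ}
    (hlam : 0 < lam) (w p : F) :
    IsMinOn (fun z => (1 / lam) * f z + (1 / 2) * ‖z - w‖ ^ 2) univ p ↔
      HasSubgradientAt f (lam • (w - p)) p := by
  have hconv : ConvexOn ℝ univ fun z : F => (1 / 2) * ‖z - w‖ ^ 2 := by
    simpa [dist_eq_norm] using ((convexOn_univ_dist w).pow (fun _ _ => dist_nonneg) 2).smul
      (by norm_num : (0 : ℝ) ≤ 1 / 2)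
  have hgrad : HasGradientAt (fun z : F => (1 / 2) * ‖z - w‖ ^ 2) (p - w) p := by
    refine hasGradientAt_iff_hasFDerivAt.2 ((((hasFDerivAt_id p).sub_const w).norm_sq.const_mul
      (1 / 2)).congr_fderiv ?_)
    ext v
    simp
  have hscaled : ConvexOn ℝ univ fun z => (1 / lam) * f z := hf.smul (one_div_pos.2 hlam).le
  have hopt := isMinOn_comp_add_iff (B := .id ℝ F) hscaled hconv hgrad
  simp only [ContinuousLinearMap.id_apply, ContinuousLinearMap.adjoint_id] at hopt
  rw [hopt, ← hasSubgradientAt_const_mul_iff (one_div_pos.2 hlam), smul_smul,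
    one_div_mul_cancel hlam.ne', one_smul]
  simp only [@eq_comm _ (p - w), neg_eq_iff_eq_neg, neg_sub, exists_eq_right]

end Subgradient

section FixedPoint

variable {E F : Type*} [AddCommGroup E] [Module ℝ E] [TopologicalSpace E]
  [AddCommGroup F] [Module ℝ F] [TopologicalSpace F]

lemma fixed_iff_prox_eq_and_grad_eq {B : E →L[ℝ] F} {Badj : F →L[ℝ] E} {Qinv : E →L[ℝ] E}
    (hQinv : Function.Injective Qinv) {grad : E → E} {lam : ℝ} {prox : F → F}
    {T1 : F → E → F} {T2 : F → E → E}
    (hT1 : ∀ v u, T1 v u =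
      (B (u - Qinv (grad u)) + (v - lam • B (Qinv (Badj v))))
        - prox (B (u - Qinv (grad u)) + (v - lam • B (Qinv (Badj v)))))
    (hT2 : ∀ v u, T2 v u = u - Qinv (grad u) - lam • Qinv (Badj (T1 v u))) (v : F) (u : E) :
    T1 v u = v ∧ T2 v u = u ↔ prox (B u + v) = B u ∧ grad u = -(lam • Badj v) := by
  have hprox_arg (hg : grad u = -(lam • Badj v)) :
      B (u - Qinv (grad u)) + (v - lam • B (Qinv (Badj v))) = B u + v := by
    rw [hg]
    simp only [map_neg, map_smul, map_sub]
    abel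
  constructor
  · rintro ⟨h₁, h₂⟩
    have hg : grad u = -(lam • Badj v) := by
      rw [hT2, h₁, sub_sub, sub_eq_self, ← map_smul, ← map_add,
        map_eq_zero_iff Qinv hQinv] at h₂
      exact eq_neg_of_add_eq_zero_left h₂
    rw [hT1, hprox_arg hg, sub_eq_iff_eq_add', add_left_inj] at h₁
    exact ⟨h₁.symm, hg⟩
  · rintro ⟨hp, hg⟩
    have h₁ : T1 v u = v := by rw [hT1, hprox_arg hg, hp, add_sub_cancel_left]
    refine ⟨h₁, ?_⟩
    rw [hT2, h₁, hg, map_neg, map_smul, sub_neg_eq_add, add_sub_cancel_right]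

end FixedPoint

theorem solution_iff_fixed_point_of_T_general (N M : ℕ)
    (f₁ : EuclideanSpace ℝ (Fin M) → ℝ) (hf₁ : ConvexOn ℝ Set.univ f₁)
    (f₂ : EuclideanSpace ℝ (Fin N) → ℝ) (hf₂ : ConvexOn ℝ Set.univ f₂)
    (gradf₂ : EuclideanSpace ℝ (Fin N) → EuclideanSpace ℝ (Fin N))
    (hgrad : ∀ u, HasGradientAt f₂ (gradf₂ u) u)
    (B : EuclideanSpace ℝ (Fin N) →L[ℝ] EuclideanSpace ℝ (Fin M))
    (Badj : EuclideanSpace ℝ (Fin M) →L[ℝ] EuclideanSpace ℝ (Fin N))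
    (hadj : ∀ (x : EuclideanSpace ℝ (Fin N)) (y : EuclideanSpace ℝ (Fin M)),
      ⟪B x, y⟫ = ⟪x, Badj y⟫)
    (Q Qinv : EuclideanSpace ℝ (Fin N) →L[ℝ] EuclideanSpace ℝ (Fin N))
    (hQinv₂ : ∀ x, Q (Qinv x) = x)
    (lam : ℝ) (hlam : 0 < lam)
    (prox : EuclideanSpace ℝ (Fin M) → EuclideanSpace ℝ (Fin M))
    (hprox : ∀ w p, prox w = p ↔
      ∀ z : EuclideanSpace ℝ (Fin M),
        (1 / lam) * f₁ p + (1 / 2) * ‖p - w‖ ^ 2 ≤ (1 / lam) * f₁ z + (1 / 2) * ‖z - w‖ ^ 2)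
    (T1 : EuclideanSpace ℝ (Fin M) → EuclideanSpace ℝ (Fin N) → EuclideanSpace ℝ (Fin M))
    (hT1 : ∀ v u, T1 v u =
      (B (u - Qinv (gradf₂ u)) + (v - lam • B (Qinv (Badj v))))
        - prox (B (u - Qinv (gradf₂ u)) + (v - lam • B (Qinv (Badj v)))))
    (T2 : EuclideanSpace ℝ (Fin M) → EuclideanSpace ℝ (Fin N) → EuclideanSpace ℝ (Fin N))
    (hT2 : ∀ v u, T2 v u = u - Qinv (gradf₂ u) - lam • Qinv (Badj (T1 v u)))
    (us : EuclideanSpace ℝ (Fin N)) :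
    (∀ u : EuclideanSpace ℝ (Fin N), f₁ (B us) + f₂ us ≤ f₁ (B u) + f₂ u) ↔
      ∃ vs : EuclideanSpace ℝ (Fin M), T1 vs us = vs ∧ T2 vs us = us := by
  have hBadj : Badj = B† := (ContinuousLinearMap.eq_adjoint_iff Badj B).2 fun y x => by
    rw [real_inner_comm, ← hadj, real_inner_comm]
  have hprox_iff (w p) : prox w = p ↔ HasSubgradientAt f₁ (lam • (w - p)) p :=
    (hprox w p).trans (isMinOn_univ_iff.symm.trans (isMinOn_prox_iff hf₁ hlam w p))
  rw [← isMinOn_univ_iff (f := fun u => f₁ (B u) + f₂ u),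
    isMinOn_comp_add_iff hf₁ hf₂ (hgrad us)]
  simp only [fixed_iff_prox_eq_and_grad_eq (Function.LeftInverse.injective hQinv₂) hT1 hT2,
    hprox_iff, add_sub_cancel_left, ← hBadj]
  constructor
  · rintro ⟨y, hy, hg⟩
    refine ⟨lam⁻¹ • y, ?_, ?_⟩
    · rwa [smul_inv_smul₀ hlam.ne']
    · rw [map_smul, smul_inv_smul₀ hlam.ne', hg]
  · rintro ⟨v, hv, hg⟩
    exact ⟨lam • v, hv, by rw [hg, map_smul]⟩

/-- (Theorem 1) `u*` solves `min_u f₁(Bu) + f₂(u)` iff there exists `v*` with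
`v* = T₁(v*, u*)` and `u* = T₂(v*, u*)`, i.e. `(v*, u*)` is a fixed point of `T`. -/
theorem solution_iff_fixed_point_of_T (N M : ℕ)
    (f₁ : EuclideanSpace ℝ (Fin M) → ℝ) (hf₁ : ConvexOn ℝ Set.univ f₁)
    (f₂ : EuclideanSpace ℝ (Fin N) → ℝ) (hf₂ : ConvexOn ℝ Set.univ f₂)
    (gradf₂ : EuclideanSpace ℝ (Fin N) → EuclideanSpace ℝ (Fin N))
    (hgrad : ∀ u, HasGradientAt f₂ (gradf₂ u) u)
    (B : EuclideanSpace ℝ (Fin N) →L[ℝ] EuclideanSpace ℝ (Fin M))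
    (Badj : EuclideanSpace ℝ (Fin M) →L[ℝ] EuclideanSpace ℝ (Fin N))
    (hadj : ∀ (x : EuclideanSpace ℝ (Fin N)) (y : EuclideanSpace ℝ (Fin M)),
      ⟪B x, y⟫ = ⟪x, Badj y⟫)
    (Q Qinv : EuclideanSpace ℝ (Fin N) →L[ℝ] EuclideanSpace ℝ (Fin N))
    (hQsymm : ∀ x y : EuclideanSpace ℝ (Fin N), ⟪Q x, y⟫ = ⟪x, Q y⟫)
    (hQpos : ∀ x : EuclideanSpace ℝ (Fin N), x ≠ 0 → 0 < ⟪x, Q x⟫)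
    (hQinv₁ : ∀ x, Qinv (Q x) = x) (hQinv₂ : ∀ x, Q (Qinv x) = x)
    (lam : ℝ) (hlam : 0 < lam)
    (prox : EuclideanSpace ℝ (Fin M) → EuclideanSpace ℝ (Fin M))
    (hprox : ∀ w p, prox w = p ↔
      ∀ z : EuclideanSpace ℝ (Fin M),
        (1 / lam) * f₁ p + (1 / 2) * ‖p - w‖ ^ 2 ≤ (1 / lam) * f₁ z + (1 / 2) * ‖z - w‖ ^ 2)
    (T1 : EuclideanSpace ℝ (Fin M) → EuclideanSpace ℝ (Fin N) → EuclideanSpace ℝ (Fin M))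
    (hT1 : ∀ v u, T1 v u =
      (B (u - Qinv (gradf₂ u)) + (v - lam • B (Qinv (Badj v))))
        - prox (B (u - Qinv (gradf₂ u)) + (v - lam • B (Qinv (Badj v)))))
    (T2 : EuclideanSpace ℝ (Fin M) → EuclideanSpace ℝ (Fin N) → EuclideanSpace ℝ (Fin N))
    (hT2 : ∀ v u, T2 v u = u - Qinv (gradf₂ u) - lam • Qinv (Badj (T1 v u)))
    (us : EuclideanSpace ℝ (Fin N)) :
    (∀ u : EuclideanSpace ℝ (Fin N), f₁ (B us) + f₂ us ≤ f₁ (B u) + f₂ u) ↔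
      ∃ vs : EuclideanSpace ℝ (Fin M), T1 vs us = vs ∧ T2 vs us = us :=
  solution_iff_fixed_point_of_T_general N M f₁ hf₁ f₂ hf₂ gradf₂ hgrad B Badj hadj Q Qinv hQinv₂ lam
    hlam prox hprox T1 hT1 T2 hT2 us
end

section
/- Assume ‖Q⁻¹‖₂ ≤ 2β and 0 < λ ≤ 1/λ_max(BQ⁻¹Bᵀ). Let w* be a fixed point of T and let w^k be generated by w^{k+1} = T(w^k) from an arbitrary initial point w⁰ ∈ ℝ^M × ℝ^N. Then the sequence ‖w^k − w*‖_{λ,Q} is non-increasing in k; in particular the sequence {w^k} is bounded. -/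
/-!
Write `A = B Q⁻¹ Bᵀ`, `Δv = v − v*`, `d = T₁(v,u) − v*` and `x = (u − u*) − Q⁻¹(∇f₂ u − ∇f₂ u*)`,
so that `T₂(v,u) − u* = x − λ Q⁻¹ Bᵀ d`. Cocoercivity together with `‖Q⁻¹‖ ≤ 2β` makes the
gradient step nonexpansive: `‖x‖_Q ≤ ‖u − u*‖_Q`. Firm nonexpansiveness of `I − prox`, applied at
the two arguments of `T₁`, gives `‖d‖² ≤ ⟪d, B x + Δv − λ A Δv⟫`, and expanding the squares yields
`‖x − λQ⁻¹Bᵀd‖²_Q + λ‖d‖² + λ²⟪A Δv, Δv⟫ + λ⟪(I − λA)(d − Δv), d − Δv⟫ ≤ ‖x‖²_Q + λ‖Δv‖²`,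
where the last two terms on the left are nonnegative because `0 ≤ λA ≤ I`; the latter bound is
where `λ ≤ 1/λ_max` enters. Boundedness then follows from `‖u‖² ≤ ‖Q⁻¹‖ ‖u‖²_Q`.
-/

open scoped RealInnerProductSpace

open Filter Topology in
theorem nonneg_of_forall_add_mul_nonneg {a b : ℝ}
    (h : ∀ t : ℝ, 0 < t → t ≤ 1 → 0 ≤ a + t * b) : 0 ≤ a := by
  have hcont : Continuous fun t : ℝ => a + t * b := by fun_prop
  have hlim : Tendsto (fun t : ℝ => a + t * b) (𝓝[>] 0) (𝓝 a) := by
    simpa using (hcont.tendsto 0).mono_left nhdsWithin_le_nhds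
  refine ge_of_tendsto hlim ?_
  filter_upwards [Ioc_mem_nhdsGT zero_lt_one] with t ht using h t ht.1 ht.2

section Prox

variable {F : Type*} [NormedAddCommGroup F] [InnerProductSpace ℝ F] {f : F → ℝ} {c : ℝ}

theorem inner_sub_le_of_forall_prox_le (hf : ConvexOn ℝ Set.univ f) (hc : 0 ≤ c) {w p : F}
    (hp : ∀ z, c * f p + (1 / 2) * ‖p - w‖ ^ 2 ≤ c * f z + (1 / 2) * ‖z - w‖ ^ 2) (z : F) :
    ⟪w - p, z - p⟫ ≤ c * f z - c * f p := by
  suffices 0 ≤ c * f z - c * f p - ⟪w - p, z - p⟫ by linarith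
  refine nonneg_of_forall_add_mul_nonneg (b := (1 / 2) * ‖z - p‖ ^ 2) fun t ht ht1 => ?_
  have hconv : f (p + t • (z - p)) ≤ (1 - t) * f p + t * f z := by
    have h := hf.2 (Set.mem_univ p) (Set.mem_univ z) (show 0 ≤ 1 - t by linarith) ht.le
      (by ring)
    rwa [show (1 - t) • p + t • z = p + t • (z - p) by module, smul_eq_mul, smul_eq_mul] at h
  have hnorm : ‖p + t • (z - p) - w‖ ^ 2
      = ‖p - w‖ ^ 2 - 2 * t * ⟪w - p, z - p⟫ + t ^ 2 * ‖z - p‖ ^ 2 := by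
    rw [show p + t • (z - p) - w = (p - w) + t • (z - p) by module, norm_add_sq_real,
      real_inner_smul_right, ← neg_sub w p, inner_neg_left, norm_smul, mul_pow, Real.norm_eq_abs,
      sq_abs, neg_sub]
    ring
  have hmin := hp (p + t • (z - p))
  rw [hnorm] at hmin
  have key : 0 ≤ t * (c * f z - c * f p - ⟪w - p, z - p⟫ + t * ((1 / 2) * ‖z - p‖ ^ 2)) := by
    nlinarith [mul_le_mul_of_nonneg_left hconv hc]
  exact (mul_nonneg_iff_of_pos_left ht).mp key

theorem norm_sub_prox_sub_sq_le_inner (hf : ConvexOn ℝ Set.univ f) (hc : 0 ≤ c) {prox : F → F}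
    (hprox : ∀ w z, c * f (prox w) + (1 / 2) * ‖prox w - w‖ ^ 2 ≤ c * f z + (1 / 2) * ‖z - w‖ ^ 2)
    (w w' : F) :
    ‖(w - prox w) - (w' - prox w')‖ ^ 2 ≤ ⟪(w - prox w) - (w' - prox w'), w - w'⟫ := by
  have h := inner_sub_le_of_forall_prox_le hf hc (hprox w) (prox w')
  have h' := inner_sub_le_of_forall_prox_le hf hc (hprox w') (prox w)
  have hsplit : w - w' = ((w - prox w) - (w' - prox w')) + (prox w - prox w') := by abel
  have hcross : 0 ≤ ⟪(w - prox w) - (w' - prox w'), prox w - prox w'⟫ := by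
    rw [← neg_sub (prox w) (prox w'), inner_neg_right] at h
    rw [inner_sub_left]
    linarith
  rw [hsplit, inner_add_right, real_inner_self_eq_norm_sq]
  linarith

end Prox

section Metric

variable {E : Type*} [NormedAddCommGroup E] [InnerProductSpace ℝ E] {Q Qinv : E →L[ℝ] E}

theorem inner_inv_apply_comm (hQsymm : ∀ x y, ⟪Q x, y⟫ = ⟪x, Q y⟫) (hQinv : ∀ x, Q (Qinv x) = x)
    (x y : E) : ⟪Qinv x, y⟫ = ⟪x, Qinv y⟫ := by
  conv_lhs => rw [← hQinv y, ← hQsymm, hQinv]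

theorem inner_inv_apply_self_nonneg (hQinv : ∀ x, Q (Qinv x) = x) (hQnn : ∀ x, 0 ≤ ⟪x, Q x⟫)
    (x : E) : 0 ≤ ⟪x, Qinv x⟫ := by
  simpa only [hQinv, real_inner_comm] using hQnn (Qinv x)

theorem inner_sub_inv_apply_map_sub (hQsymm : ∀ x y, ⟪Q x, y⟫ = ⟪x, Q y⟫)
    (hQinv : ∀ x, Q (Qinv x) = x) (x y : E) :
    ⟪x - Qinv y, Q (x - Qinv y)⟫ = ⟪x, Q x⟫ - 2 * ⟪y, x⟫ + ⟪y, Qinv y⟫ := by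
  have hcross : ⟪Qinv y, Q x⟫ = ⟪y, x⟫ := by rw [← hQsymm, hQinv]
  rw [map_sub, hQinv, inner_sub_left, inner_sub_right, inner_sub_right, hcross,
    real_inner_comm x y, real_inner_comm (Qinv y) y]
  ring

theorem inner_inv_apply_self_le (x : E) : ⟪x, Qinv x⟫ ≤ ‖Qinv‖ * ‖x‖ ^ 2 :=
  (real_inner_le_norm _ _).trans <| by
    nlinarith [Qinv.le_opNorm x, norm_nonneg x]

theorem norm_sq_le_opNorm_inv_mul_inner (hQsymm : ∀ x y, ⟪Q x, y⟫ = ⟪x, Q y⟫)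
    (hQinv : ∀ x, Q (Qinv x) = x) (hQnn : ∀ x, 0 ≤ ⟪x, Q x⟫) (x : E) :
    ‖x‖ ^ 2 ≤ ‖Qinv‖ * ⟪x, Q x⟫ := by
  rcases (norm_nonneg Qinv).eq_or_lt with hc | hc
  · obtain rfl : x = 0 := by rw [← hQinv x, norm_eq_zero.mp hc.symm]; simp
    simp
  set c := ‖Qinv‖
  have key := hQnn (x - Qinv (c⁻¹ • x))
  rw [inner_sub_inv_apply_map_sub hQsymm hQinv, map_smul, real_inner_smul_left,
    real_inner_smul_left, real_inner_smul_right, real_inner_self_eq_norm_sq] at key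
  have hle : c⁻¹ * (c⁻¹ * ⟪x, Qinv x⟫) ≤ c⁻¹ * ‖x‖ ^ 2 := by
    calc c⁻¹ * (c⁻¹ * ⟪x, Qinv x⟫) ≤ c⁻¹ * (c⁻¹ * (c * ‖x‖ ^ 2)) := by
          gcongr; exact inner_inv_apply_self_le x
      _ = c⁻¹ * ‖x‖ ^ 2 := by field_simp
  rw [← inv_mul_le_iff₀ hc]
  linarith

theorem inner_sub_inv_apply_map_sub_le (hQsymm : ∀ x y, ⟪Q x, y⟫ = ⟪x, Q y⟫)
    (hQinv : ∀ x, Q (Qinv x) = x) {β : ℝ} (hQnorm : ‖Qinv‖ ≤ 2 * β) {x g : E}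
    (hg : β * ‖g‖ ^ 2 ≤ ⟪g, x⟫) :
    ⟪x - Qinv g, Q (x - Qinv g)⟫ ≤ ⟪x, Q x⟫ := by
  rw [inner_sub_inv_apply_map_sub hQsymm hQinv]
  nlinarith [inner_inv_apply_self_le (Qinv := Qinv) g, sq_nonneg ‖g‖]

end Metric

section Spectral

variable {F : Type*} [NormedAddCommGroup F] [InnerProductSpace ℝ F] [FiniteDimensional ℝ F]
  {T : F →L[ℝ] F}

theorem inner_apply_self_le_mul_norm_sq_of_mem_upperBounds (hT : (T : F →ₗ[ℝ] F).IsSymmetric)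
    {μ : ℝ} (hμ : μ ∈ upperBounds {ν | Module.End.HasEigenvalue (T : F →ₗ[ℝ] F) ν}) (x : F) :
    ⟪T x, x⟫ ≤ μ * ‖x‖ ^ 2 := by
  rcases eq_or_ne x 0 with rfl | hx
  · simp
  have : Nontrivial F := ⟨⟨x, 0, hx⟩⟩
  have hbdd : BddAbove (Set.range fun y : {y : F // y ≠ 0} =>
      RCLike.re ⟪(T : F →ₗ[ℝ] F) y, y⟫ / ‖(y : F)‖ ^ 2) :=
    ⟨‖T‖, by rintro _ ⟨y, rfl⟩; exact (le_abs_self _).trans (T.rayleighQuotient_le_norm y)⟩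
  have h := (le_ciSup hbdd ⟨x, hx⟩).trans (hμ hT.hasEigenvalue_iSup_of_finiteDimensional)
  rwa [div_le_iff₀ (by positivity)] at h

theorem mul_inner_apply_self_le_norm_sq (hT : (T : F →ₗ[ℝ] F).IsSymmetric)
    {μ : ℝ} (hμ : μ ∈ upperBounds {ν | Module.End.HasEigenvalue (T : F →ₗ[ℝ] F) ν})
    {lam : ℝ} (hlam : 0 < lam) (hlamμ : lam ≤ 1 / μ) (x : F) :
    lam * ⟪T x, x⟫ ≤ ‖x‖ ^ 2 := by
  have hμpos : 0 < μ := by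
    by_contra! h
    linarith [one_div_nonpos.mpr h]
  rw [le_div_iff₀ hμpos] at hlamμ
  calc lam * ⟪T x, x⟫ ≤ lam * (μ * ‖x‖ ^ 2) := by
        gcongr; exact inner_apply_self_le_mul_norm_sq_of_mem_upperBounds hT hμ x
    _ ≤ ‖x‖ ^ 2 := by nlinarith [sq_nonneg ‖x‖]

end Spectral

section Coupling

variable {E F : Type*} [NormedAddCommGroup E] [InnerProductSpace ℝ E]
  [NormedAddCommGroup F] [InnerProductSpace ℝ F]
  {B : E →L[ℝ] F} {Badj : F →L[ℝ] E} {Q Qinv : E →L[ℝ] E}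

theorem inner_adj_inv_apply_comm (hadj : ∀ x y, ⟪B x, y⟫ = ⟪x, Badj y⟫)
    (hQsymm : ∀ x y, ⟪Q x, y⟫ = ⟪x, Q y⟫) (hQinv : ∀ x, Q (Qinv x) = x) (y z : F) :
    ⟪B (Qinv (Badj y)), z⟫ = ⟪y, B (Qinv (Badj z))⟫ := by
  rw [hadj, inner_inv_apply_comm hQsymm hQinv, real_inner_comm, ← hadj, real_inner_comm]

theorem inner_adj_inv_apply_self_nonneg (hadj : ∀ x y, ⟪B x, y⟫ = ⟪x, Badj y⟫)
    (hQinv : ∀ x, Q (Qinv x) = x) (hQnn : ∀ x, 0 ≤ ⟪x, Q x⟫) (y : F) :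
    0 ≤ ⟪B (Qinv (Badj y)), y⟫ := by
  rw [hadj, real_inner_comm]
  exact inner_inv_apply_self_nonneg hQinv hQnn _

theorem dual_step_le (hadj : ∀ x y, ⟪B x, y⟫ = ⟪x, Badj y⟫)
    (hQsymm : ∀ x y, ⟪Q x, y⟫ = ⟪x, Q y⟫) (hQinv : ∀ x, Q (Qinv x) = x)
    (hQnn : ∀ x, 0 ≤ ⟪x, Q x⟫) {lam : ℝ} (hlam : 0 < lam)
    (hA : ∀ y, lam * ⟪B (Qinv (Badj y)), y⟫ ≤ ‖y‖ ^ 2) {x : E} {d y : F}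
    (hd : ‖d‖ ^ 2 ≤ ⟪d, B x + y - lam • B (Qinv (Badj y))⟫) :
    ⟪x - lam • Qinv (Badj d), Q (x - lam • Qinv (Badj d))⟫ + lam * ‖d‖ ^ 2
      ≤ ⟪x, Q x⟫ + lam * ‖y‖ ^ 2 := by
  have hcomm := inner_adj_inv_apply_comm hadj hQsymm hQinv
  have hexpand : ⟪x - lam • Qinv (Badj d), Q (x - lam • Qinv (Badj d))⟫
      = ⟪x, Q x⟫ - 2 * lam * ⟪d, B x⟫ + lam ^ 2 * ⟪B (Qinv (Badj d)), d⟫ := by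
    have h₁ : ⟪Badj d, x⟫ = ⟪d, B x⟫ := by rw [real_inner_comm, ← hadj, real_inner_comm]
    have h₂ : ⟪Badj d, Qinv (Badj d)⟫ = ⟪B (Qinv (Badj d)), d⟫ := by
      rw [real_inner_comm, ← hadj]
    rw [← map_smul, inner_sub_inv_apply_map_sub hQsymm hQinv, map_smul, real_inner_smul_left,
      real_inner_smul_left, real_inner_smul_right, h₁, h₂]
    ring
  have hA' := hA (d - y)
  rw [map_sub, map_sub, map_sub, inner_sub_left, inner_sub_right, inner_sub_right,
    hcomm y d, norm_sub_sq_real] at hA'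
  rw [inner_sub_right, inner_add_right, real_inner_smul_right] at hd
  rw [hexpand]
  have hy := inner_adj_inv_apply_self_nonneg hadj hQinv hQnn y
  linear_combination 2 * lam * hd + lam * hA' + lam ^ 2 * hy
    + 2 * lam ^ 2 * hcomm d y + lam ^ 2 * real_inner_comm (B (Qinv (Badj d))) y

theorem fejer_step_le {lam β : ℝ} {R : F → F} {grad : E → E} {T1 : F → E → F} {T2 : F → E → E}
    (hadj : ∀ x y, ⟪B x, y⟫ = ⟪x, Badj y⟫)
    (hQsymm : ∀ x y, ⟪Q x, y⟫ = ⟪x, Q y⟫) (hQinv : ∀ x, Q (Qinv x) = x)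
    (hQnn : ∀ x, 0 ≤ ⟪x, Q x⟫) (hQnorm : ‖Qinv‖ ≤ 2 * β) (hlam : 0 < lam)
    (hA : ∀ y, lam * ⟪B (Qinv (Badj y)), y⟫ ≤ ‖y‖ ^ 2)
    (hR : ∀ w w', ‖R w - R w'‖ ^ 2 ≤ ⟪R w - R w', w - w'⟫)
    (hcoco : ∀ u u', β * ‖grad u - grad u'‖ ^ 2 ≤ ⟪grad u - grad u', u - u'⟫)
    (hT1 : ∀ v u, T1 v u = R (B (u - Qinv (grad u)) + (v - lam • B (Qinv (Badj v)))))
    (hT2 : ∀ v u, T2 v u = u - Qinv (grad u) - lam • Qinv (Badj (T1 v u)))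
    {vs : F} {us : E} (hfix1 : T1 vs us = vs) (hfix2 : T2 vs us = us) (v : F) (u : E) :
    ⟪T2 v u - us, Q (T2 v u - us)⟫ + lam * ‖T1 v u - vs‖ ^ 2
      ≤ ⟪u - us, Q (u - us)⟫ + lam * ‖v - vs‖ ^ 2 := by
  set x := (u - us) - Qinv (grad u - grad us)
  have hu : T2 v u - us = x - lam • Qinv (Badj (T1 v u - vs)) := by
    have hs := hT2 vs us
    rw [hfix1, hfix2] at hs
    rw [hT2]
    simp only [x, map_sub, smul_sub]
    linear_combination (norm := module) -hs
  set w := B (u - Qinv (grad u)) + (v - lam • B (Qinv (Badj v)))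
  set ws := B (us - Qinv (grad us)) + (vs - lam • B (Qinv (Badj vs)))
  have hv : T1 v u - vs = R w - R ws := by
    conv_lhs => rw [hT1, ← hfix1, hT1]
  have hw : w - ws = B x + (v - vs) - lam • B (Qinv (Badj (v - vs))) := by
    simp only [w, ws, x, map_sub, smul_sub]
    abel
  have hfirm := hR w ws
  rw [← hv, hw] at hfirm
  rw [hu]
  calc _ ≤ ⟪x, Q x⟫ + lam * ‖v - vs‖ ^ 2 :=
        dual_step_le hadj hQsymm hQinv hQnn hlam hA hfirm
    _ ≤ ⟪u - us, Q (u - us)⟫ + lam * ‖v - vs‖ ^ 2 := by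
        gcongr
        exact inner_sub_inv_apply_map_sub_le hQsymm hQinv hQnorm (hcoco u us)

end Coupling

theorem norm_le_add_sqrt_of_norm_sub_sq_le {E : Type*} [SeminormedAddCommGroup E] {x y : E}
    {C : ℝ} (h : ‖x - y‖ ^ 2 ≤ C) : ‖x‖ ≤ ‖y‖ + √C :=
  (norm_le_norm_add_norm_sub' x y).trans <| by gcongr; exact Real.le_sqrt_of_sq_le h

theorem fp2o_qn_fejer_monotone_general (N M : ℕ)
    (f₁ : EuclideanSpace ℝ (Fin M) → ℝ) (hf₁ : ConvexOn ℝ Set.univ f₁)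
    (gradf₂ : EuclideanSpace ℝ (Fin N) → EuclideanSpace ℝ (Fin N))
    (B : EuclideanSpace ℝ (Fin N) →L[ℝ] EuclideanSpace ℝ (Fin M))
    (Badj : EuclideanSpace ℝ (Fin M) →L[ℝ] EuclideanSpace ℝ (Fin N))
    (hadj : ∀ (x : EuclideanSpace ℝ (Fin N)) (y : EuclideanSpace ℝ (Fin M)),
      ⟪B x, y⟫ = ⟪x, Badj y⟫)
    (Q Qinv : EuclideanSpace ℝ (Fin N) →L[ℝ] EuclideanSpace ℝ (Fin N))
    (hQsymm : ∀ x y : EuclideanSpace ℝ (Fin N), ⟪Q x, y⟫ = ⟪x, Q y⟫)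
    (hQpos : ∀ x : EuclideanSpace ℝ (Fin N), x ≠ 0 → 0 < ⟪x, Q x⟫)
    (hQinv₂ : ∀ x, Q (Qinv x) = x)
    (lam : ℝ) (hlam : 0 < lam)
    (β : ℝ)
    (hcoco : ∀ v w : EuclideanSpace ℝ (Fin N),
      β * ‖gradf₂ v - gradf₂ w‖ ^ 2 ≤ ⟪gradf₂ v - gradf₂ w, v - w⟫)
    (lmax : ℝ)
    (hlmax : IsGreatest
      {μ : ℝ | Module.End.HasEigenvalue ((B.comp (Qinv.comp Badj)).toLinearMap) μ} lmax)
    (hlam2 : lam ≤ 1 / lmax)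
    (prox : EuclideanSpace ℝ (Fin M) → EuclideanSpace ℝ (Fin M))
    (hprox : ∀ w p, prox w = p ↔
      ∀ z : EuclideanSpace ℝ (Fin M),
        (1 / lam) * f₁ p + (1 / 2) * ‖p - w‖ ^ 2 ≤ (1 / lam) * f₁ z + (1 / 2) * ‖z - w‖ ^ 2)
    (T1 : EuclideanSpace ℝ (Fin M) → EuclideanSpace ℝ (Fin N) → EuclideanSpace ℝ (Fin M))
    (hT1 : ∀ v u, T1 v u =
      (B (u - Qinv (gradf₂ u)) + (v - lam • B (Qinv (Badj v))))
        - prox (B (u - Qinv (gradf₂ u)) + (v - lam • B (Qinv (Badj v)))))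
    (T2 : EuclideanSpace ℝ (Fin M) → EuclideanSpace ℝ (Fin N) → EuclideanSpace ℝ (Fin N))
    (hT2 : ∀ v u, T2 v u = u - Qinv (gradf₂ u) - lam • Qinv (Badj (T1 v u)))
    (hQnorm : ‖Qinv‖ ≤ 2 * β)
    (vs : EuclideanSpace ℝ (Fin M)) (us : EuclideanSpace ℝ (Fin N))
    (hfix1 : T1 vs us = vs) (hfix2 : T2 vs us = us)
    (v : ℕ → EuclideanSpace ℝ (Fin M)) (u : ℕ → EuclideanSpace ℝ (Fin N))
    (hrecv : ∀ k, v (k + 1) = T1 (v k) (u k))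
    (hrecu : ∀ k, u (k + 1) = T2 (v k) (u k)) :
    (∀ k, Real.sqrt (⟪u (k + 1) - us, Q (u (k + 1) - us)⟫ + lam * ‖v (k + 1) - vs‖ ^ 2)
        ≤ Real.sqrt (⟪u k - us, Q (u k - us)⟫ + lam * ‖v k - vs‖ ^ 2)) ∧
    (∃ R : ℝ, ∀ k, ‖v k‖ ≤ R ∧ ‖u k‖ ≤ R) := by
  have hQnn : ∀ x, 0 ≤ ⟪x, Q x⟫ := fun x => by
    rcases eq_or_ne x 0 with rfl | hx
    · simp
    · exact (hQpos x hx).le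
  have hR := norm_sub_prox_sub_sq_le_inner hf₁ (by positivity) fun w => (hprox w (prox w)).1 rfl
  have hA := mul_inner_apply_self_le_norm_sq (T := B.comp (Qinv.comp Badj))
    (inner_adj_inv_apply_comm hadj hQsymm hQinv₂) hlmax.2 hlam hlam2
  set V := fun k => ⟪u k - us, Q (u k - us)⟫ + lam * ‖v k - vs‖ ^ 2
  have hstep (k : ℕ) : V (k + 1) ≤ V k := by
    simp only [V, hrecu, hrecv]
    exact fejer_step_le hadj hQsymm hQinv₂ hQnn hQnorm hlam hA hR hcoco hT1 hT2 hfix1 hfix2 _ _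
  have hV (k : ℕ) : V k ≤ V 0 := antitone_nat_of_succ_le hstep (Nat.zero_le k)
  refine ⟨fun k => Real.sqrt_le_sqrt (hstep k),
    max (‖vs‖ + √(V 0 / lam)) (‖us‖ + √(‖Qinv‖ * V 0)), fun k => ⟨?_, ?_⟩⟩
  · refine le_max_of_le_left (norm_le_add_sqrt_of_norm_sub_sq_le ?_)
    rw [le_div_iff₀ hlam]
    nlinarith [hV k, hQnn (u k - us)]
  · refine le_max_of_le_right (norm_le_add_sqrt_of_norm_sub_sq_le ?_)
    calc ‖u k - us‖ ^ 2 ≤ ‖Qinv‖ * ⟪u k - us, Q (u k - us)⟫ :=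
          norm_sq_le_opNorm_inv_mul_inner hQsymm hQinv₂ hQnn _
      _ ≤ ‖Qinv‖ * V 0 := by
          gcongr
          nlinarith [hV k, mul_nonneg hlam.le (sq_nonneg ‖v k - vs‖)]

/-- Under `‖Q⁻¹‖₂ ≤ 2β` and `0 < λ ≤ 1/λ_max(BQ⁻¹Bᵀ)`, if `w* = (v*,u*)` is a fixed
point of `T` and `w^{k+1} = T(w^k)`, then `‖w^k − w*‖_{λ,Q}` is non-increasing in `k`;
in particular the sequence `{w^k}` is bounded. -/
theorem fp2o_qn_fejer_monotone (N M : ℕ)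
    (f₁ : EuclideanSpace ℝ (Fin M) → ℝ) (hf₁ : ConvexOn ℝ Set.univ f₁)
    (f₂ : EuclideanSpace ℝ (Fin N) → ℝ) (hf₂ : ConvexOn ℝ Set.univ f₂)
    (gradf₂ : EuclideanSpace ℝ (Fin N) → EuclideanSpace ℝ (Fin N))
    (hgrad : ∀ u, HasGradientAt f₂ (gradf₂ u) u)
    (B : EuclideanSpace ℝ (Fin N) →L[ℝ] EuclideanSpace ℝ (Fin M))
    (Badj : EuclideanSpace ℝ (Fin M) →L[ℝ] EuclideanSpace ℝ (Fin N))
    (hadj : ∀ (x : EuclideanSpace ℝ (Fin N)) (y : EuclideanSpace ℝ (Fin M)),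
      ⟪B x, y⟫ = ⟪x, Badj y⟫)
    (Q Qinv : EuclideanSpace ℝ (Fin N) →L[ℝ] EuclideanSpace ℝ (Fin N))
    (hQsymm : ∀ x y : EuclideanSpace ℝ (Fin N), ⟪Q x, y⟫ = ⟪x, Q y⟫)
    (hQpos : ∀ x : EuclideanSpace ℝ (Fin N), x ≠ 0 → 0 < ⟪x, Q x⟫)
    (hQinv₁ : ∀ x, Qinv (Q x) = x) (hQinv₂ : ∀ x, Q (Qinv x) = x)
    (lam : ℝ) (hlam : 0 < lam)
    (β : ℝ) (hβ : 0 < β)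
    (hcoco : ∀ v w : EuclideanSpace ℝ (Fin N),
      β * ‖gradf₂ v - gradf₂ w‖ ^ 2 ≤ ⟪gradf₂ v - gradf₂ w, v - w⟫)
    (lmax : ℝ)
    (hlmax : IsGreatest
      {μ : ℝ | Module.End.HasEigenvalue ((B.comp (Qinv.comp Badj)).toLinearMap) μ} lmax)
    (hlam2 : lam ≤ 1 / lmax)
    (prox : EuclideanSpace ℝ (Fin M) → EuclideanSpace ℝ (Fin M))
    (hprox : ∀ w p, prox w = p ↔
      ∀ z : EuclideanSpace ℝ (Fin M),
        (1 / lam) * f₁ p + (1 / 2) * ‖p - w‖ ^ 2 ≤ (1 / lam) * f₁ z + (1 / 2) * ‖z - w‖ ^ 2)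
    (T1 : EuclideanSpace ℝ (Fin M) → EuclideanSpace ℝ (Fin N) → EuclideanSpace ℝ (Fin M))
    (hT1 : ∀ v u, T1 v u =
      (B (u - Qinv (gradf₂ u)) + (v - lam • B (Qinv (Badj v))))
        - prox (B (u - Qinv (gradf₂ u)) + (v - lam • B (Qinv (Badj v)))))
    (T2 : EuclideanSpace ℝ (Fin M) → EuclideanSpace ℝ (Fin N) → EuclideanSpace ℝ (Fin N))
    (hT2 : ∀ v u, T2 v u = u - Qinv (gradf₂ u) - lam • Qinv (Badj (T1 v u)))
    (hQnorm : ‖Qinv‖ ≤ 2 * β)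
    (vs : EuclideanSpace ℝ (Fin M)) (us : EuclideanSpace ℝ (Fin N))
    (hfix1 : T1 vs us = vs) (hfix2 : T2 vs us = us)
    (v : ℕ → EuclideanSpace ℝ (Fin M)) (u : ℕ → EuclideanSpace ℝ (Fin N))
    (hrecv : ∀ k, v (k + 1) = T1 (v k) (u k))
    (hrecu : ∀ k, u (k + 1) = T2 (v k) (u k)) :
    (∀ k, Real.sqrt (⟪u (k + 1) - us, Q (u (k + 1) - us)⟫ + lam * ‖v (k + 1) - vs‖ ^ 2)
        ≤ Real.sqrt (⟪u k - us, Q (u k - us)⟫ + lam * ‖v k - vs‖ ^ 2)) ∧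
    (∃ R : ℝ, ∀ k, ‖v k‖ ≤ R ∧ ‖u k‖ ≤ R) :=
  fp2o_qn_fejer_monotone_general N M f₁ hf₁ gradf₂ B Badj hadj Q Qinv hQsymm hQpos hQinv₂ lam hlam β
    hcoco lmax hlmax hlam2 prox hprox T1 hT1 T2 hT2 hQnorm vs us hfix1 hfix2 v u hrecv hrecu
end
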